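/- Let (t_n) be defined by t_0 = 1 and t_n = p_n - \sum_{i=0}^{n-1} \binom{n}{i}_q p_{n-i}(z_i) t_i. Then the constant coefficient satisfies t_n(0) = \sum_{k=1}^{n} (-1)^k \sum_{(b_1,...,b_k) \models n} \prod_{i=1}^{k} \binom{s_i}{b_i}_q \, p_{b_i}(z_{n - s_i}), where the inner sum ranges over compositions (b_1,...,b_k) of n with partial sums s_i = b_1 + \dots + b_i, assuming p_m(0) = 0 for all m \ge 1 and p_0 = 1. -/

import Mathlib

open Polynomial Finset

/-!
Let `T n` be the signed sum over compositions of `n`. Splitting off the first block `n - i` of a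
composition of `n` leaves a composition of `i`; the `z`-indices `n - sⱼ` of the remaining blocks
become `i - sⱼ`, exactly as in `T i`, while their q-binomials `[sⱼ choose bⱼ]` become
`[n - i + sⱼ choose bⱼ]`. By the q-multinomial identity
`[a + m choose m] ∏ⱼ [sⱼ choose bⱼ] = ∏ⱼ [a + sⱼ choose bⱼ]` (both sides are
`[a + m]! / ([a]! ∏ⱼ [bⱼ]!)`), this change is the factor `[n choose i]`. So `T` satisfies the
recursion of `(t n).eval 0` (in which `(p n).eval 0 = 0`), and the two agree by strong induction.
-/

/-- The Gaussian (q-)binomial coefficient as a polynomial in `q` over `ℤ`,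
via the q-Pascal recurrence. -/
noncomputable def qBin : ℕ → ℕ → Polynomial ℤ
  | _, 0 => 1
  | 0, _ + 1 => 0
  | n + 1, k + 1 => qBin n k + Polynomial.X ^ (k + 1) * qBin n (k + 1)

/-- The Gaussian binomial evaluated at a ring element `q`. -/
noncomputable def qBinAt {R : Type*} [CommRing R] (q : R) (n k : ℕ) : R :=
  Polynomial.aeval q (qBin n k)

noncomputable def qNat (n : ℕ) : ℤ[X] := ∑ i ∈ range n, X ^ i

noncomputable def qFactorial (n : ℕ) : ℤ[X] := ∏ i ∈ range n, qNat (i + 1)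

theorem qNat_add (a b : ℕ) : qNat (a + b) = qNat a + X ^ a * qNat b := by
  simp only [qNat, sum_range_add, mul_sum, pow_add]

theorem qNat_ne_zero {n : ℕ} (hn : n ≠ 0) : qNat n ≠ 0 := fun h => by
  simpa [qNat, hn] using congrArg (eval 1) h

theorem qFactorial_succ (n : ℕ) : qFactorial (n + 1) = qFactorial n * qNat (n + 1) :=
  prod_range_succ _ n

theorem qFactorial_ne_zero (n : ℕ) : qFactorial n ≠ 0 :=
  prod_ne_zero_iff.2 fun i _ => qNat_ne_zero i.succ_ne_zero

theorem qBin_zero_right (n : ℕ) : qBin n 0 = 1 := by cases n <;> rfl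

theorem qBin_succ_succ (n k : ℕ) :
    qBin (n + 1) (k + 1) = qBin n k + X ^ (k + 1) * qBin n (k + 1) := rfl

theorem qBin_eq_zero_of_lt : ∀ {n k : ℕ}, n < k → qBin n k = 0
  | 0, _ + 1, _ => rfl
  | n + 1, k + 1, h => by
    rw [qBin_succ_succ, qBin_eq_zero_of_lt (by omega), qBin_eq_zero_of_lt (by omega)]; ring

theorem qBin_self : ∀ n : ℕ, qBin n n = 1
  | 0 => rfl
  | n + 1 => by rw [qBin_succ_succ, qBin_self n, qBin_eq_zero_of_lt n.lt_succ_self]; ring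

theorem qBin_mul_qFactorial_mul_qFactorial :
    ∀ {n k : ℕ}, k ≤ n → qBin n k * (qFactorial k * qFactorial (n - k)) = qFactorial n
  | n, 0, _ => by simp [qBin_zero_right, qFactorial]
  | n + 1, k + 1, hk => by
    rcases (Nat.le_of_succ_le_succ hk).eq_or_lt with rfl | hlt
    · simp [qBin_self, qFactorial]
    · have h₁ := qBin_mul_qFactorial_mul_qFactorial (n := n) (k := k) hlt.le
      have h₂ := qBin_mul_qFactorial_mul_qFactorial (n := n) (k := k + 1) hlt
      have hfac : qFactorial (n - k) = qFactorial (n - (k + 1)) * qNat (n - k) := by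
        rw [show n - k = n - (k + 1) + 1 by omega, qFactorial_succ]
      have hqNat : qNat (n + 1) = qNat (k + 1) + X ^ (k + 1) * qNat (n - k) := by
        rw [← qNat_add, show k + 1 + (n - k) = n + 1 by omega]
      rw [hfac] at h₁
      rw [qFactorial_succ k] at h₂
      rw [Nat.add_sub_add_right, qBin_succ_succ, qFactorial_succ n, qFactorial_succ k, hfac]
      linear_combination qNat (k + 1) * h₁ + X ^ (k + 1) * qNat (n - k) * h₂ - qFactorial n * hqNat

theorem qBin_mul_qBin {n k s : ℕ} (hsk : s ≤ k) (hkn : k ≤ n) :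
    qBin n k * qBin k s = qBin n s * qBin (n - s) (k - s) := by
  have h₁ := qBin_mul_qFactorial_mul_qFactorial hkn
  have h₂ := qBin_mul_qFactorial_mul_qFactorial hsk
  have h₃ := qBin_mul_qFactorial_mul_qFactorial (hsk.trans hkn)
  have h₄ := qBin_mul_qFactorial_mul_qFactorial (Nat.sub_le_sub_right hkn s)
  rw [Nat.sub_sub_sub_cancel_right hsk] at h₄
  refine mul_right_cancel₀ (mul_ne_zero (mul_ne_zero (qFactorial_ne_zero s)
    (qFactorial_ne_zero (k - s))) (qFactorial_ne_zero (n - k))) ?_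
  linear_combination qBin n k * qFactorial (n - k) * h₂ + h₁ - h₃ - qBin n s * qFactorial s * h₄

theorem qBinAt_self {R : Type*} [CommRing R] (q : R) (n : ℕ) : qBinAt q n n = 1 := by
  simp [qBinAt, qBin_self]

theorem qBinAt_zero_right {R : Type*} [CommRing R] (q : R) (n : ℕ) : qBinAt q n 0 = 1 := by
  simp [qBinAt, qBin_zero_right]

theorem qBinAt_mul_qBinAt {R : Type*} [CommRing R] (q : R) {n k s : ℕ} (hsk : s ≤ k)
    (hkn : k ≤ n) : qBinAt q n k * qBinAt q k s = qBinAt q n s * qBinAt q (n - s) (k - s) := by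
  simp only [qBinAt, ← map_mul, qBin_mul_qBin hsk hkn]

section BlockProd

variable {M : Type*} [CommMonoid M]

def blockProd (f : ℕ → ℕ → M) (L : List ℕ) : M :=
  ∏ i ∈ range L.length, f (L.take (i + 1)).sum (L.getD i 0)

@[simp]
theorem blockProd_nil (f : ℕ → ℕ → M) : blockProd f [] = 1 := rfl

theorem blockProd_cons (f : ℕ → ℕ → M) (b : ℕ) (L : List ℕ) :
    blockProd f (b :: L) = f b b * blockProd (fun s => f (b + s)) L := by
  simp [blockProd, prod_range_succ', mul_comm]

theorem blockProd_mul (f g : ℕ → ℕ → M) (L : List ℕ) :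
    blockProd (fun s b => f s b * g s b) L = blockProd f L * blockProd g L :=
  prod_mul_distrib

end BlockProd

theorem blockProd_qBinAt_add {R : Type*} [CommRing R] (q : R) (a : ℕ) (L : List ℕ) :
    blockProd (fun s b => qBinAt q (a + s) b) L =
      qBinAt q (a + L.sum) L.sum * blockProd (qBinAt q) L := by
  induction L generalizing a with
  | nil => simp [qBinAt_zero_right]
  | cons b L ih =>
    simp only [blockProd_cons, ← add_assoc, ih, List.sum_cons, qBinAt_self]
    have := qBinAt_mul_qBinAt q (n := a + b + L.sum) (k := b + L.sum) (s := L.sum) (by omega)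
      (by omega)
    rw [show a + b + L.sum - L.sum = a + b by omega, Nat.add_sub_cancel] at this
    linear_combination -blockProd (qBinAt q) L * this

namespace Composition

def sigmaCons (n : ℕ) (x : Σ i : Fin (n + 1), Composition i) : Composition (n + 1) where
  blocks := (n + 1 - x.1) :: x.2.blocks
  blocks_pos {j} hj := by
    rcases List.mem_cons.1 hj with rfl | hj
    · omega
    · exact x.2.blocks_pos hj
  blocks_sum := by simp

theorem sigmaCons_bijective (n : ℕ) : Function.Bijective (sigmaCons n) := by
  constructor
  · rintro ⟨i, c⟩ ⟨j, d⟩ h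
    obtain ⟨hij, hcd⟩ := List.cons_eq_cons.1 (congrArg blocks h)
    simp only at hij hcd
    obtain rfl : i = j := Fin.ext (by omega)
    simp [Composition.ext_iff, hcd]
  · rintro ⟨_ | ⟨b, L⟩, hpos, hsum⟩
    · simp at hsum
    have hb : 0 < b := hpos List.mem_cons_self
    rw [List.sum_cons] at hsum
    refine ⟨⟨⟨L.sum, by omega⟩, ⟨L, fun h => hpos (List.mem_cons_of_mem b h), rfl⟩⟩, ?_⟩
    ext1
    simp only [sigmaCons, List.cons.injEq, and_true]
    omega

theorem sum_univ_succ {A : Type*} [AddCommMonoid A] (n : ℕ) (f : List ℕ → A) :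
    ∑ c : Composition (n + 1), f c.blocks =
      ∑ i ∈ range (n + 1), ∑ c : Composition i, f ((n + 1 - i) :: c.blocks) := by
  rw [← Fintype.sum_bijective _ (sigmaCons_bijective n) (fun x => f (sigmaCons n x).blocks)
    (fun c => f c.blocks) fun _ => rfl, Fintype.sum_sigma]
  exact Fin.sum_univ_eq_sum_range (fun i => ∑ c : Composition i, f ((n + 1 - i) :: c.blocks)) _

theorem sum_univ_zero {A : Type*} [AddCommMonoid A] (f : List ℕ → A) :
    ∑ c : Composition 0, f c.blocks = f [] := by
  have hnil (c : Composition 0) : c.blocks = [] :=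
    List.eq_nil_of_length_eq_zero (Nat.le_zero.1 c.length_le)
  have : Subsingleton (Composition 0) := ⟨fun c d => Composition.ext (by rw [hnil c, hnil d])⟩
  rw [Fintype.sum_subsingleton _ default, hnil]

end Composition

section Goncarov

variable {R : Type*} [CommRing R] (q : R) (z : ℕ → R) (p : ℕ → R[X])

noncomputable def goncarovWeight (n : ℕ) (L : List ℕ) : R :=
  (-1) ^ L.length * blockProd (fun s b => qBinAt q s b * (p b).eval (z (n - s))) L

noncomputable def goncarovConstTerm (n : ℕ) : R :=
  ∑ c : Composition n, goncarovWeight q z p n c.blocks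

theorem goncarovWeight_cons (b : ℕ) (L : List ℕ) :
    goncarovWeight q z p (b + L.sum) (b :: L) =
      -(qBinAt q (b + L.sum) L.sum * (p b).eval (z L.sum)) * goncarovWeight q z p L.sum L := by
  simp only [goncarovWeight, blockProd_cons, Nat.add_sub_add_left, Nat.add_sub_cancel_left,
    blockProd_mul, blockProd_qBinAt_add, qBinAt_self, List.length_cons, pow_succ]
  ring

theorem goncarovConstTerm_zero : goncarovConstTerm q z p 0 = 1 := by
  rw [goncarovConstTerm, Composition.sum_univ_zero]
  simp [goncarovWeight]

theorem goncarovConstTerm_succ (n : ℕ) :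
    goncarovConstTerm q z p (n + 1) = -∑ i ∈ range (n + 1),
      qBinAt q (n + 1) i * (p (n + 1 - i)).eval (z i) * goncarovConstTerm q z p i := by
  rw [goncarovConstTerm, Composition.sum_univ_succ, ← sum_neg_distrib]
  refine sum_congr rfl fun i hi => ?_
  rw [goncarovConstTerm, mul_sum, ← sum_neg_distrib]
  refine sum_congr rfl fun c _ => ?_
  have h := goncarovWeight_cons q z p (n + 1 - i) c.blocks
  rw [c.blocks_sum, Nat.sub_add_cancel (mem_range.1 hi).le] at h
  rw [h, neg_mul]

end Goncarov

theorem goncarov_const_term_formula_general {R : Type*} [CommRing R] (q : R) (z : ℕ → R)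
    (p t : ℕ → Polynomial R)
    (hpeval : ∀ m : ℕ, 1 ≤ m → (p m).eval 0 = 0)
    (ht0 : t 0 = 1)
    (hrec : ∀ n : ℕ, 1 ≤ n → t n = p n - ∑ i ∈ Finset.range n,
      Polynomial.C (qBinAt q n i * (p (n - i)).eval (z i)) * t i) :
    ∀ n : ℕ, 1 ≤ n →
      (t n).eval 0 = ∑ c : Composition n, (-1 : R) ^ c.length *
        ∏ i ∈ Finset.range c.length,
          qBinAt q ((c.blocks.take (i + 1)).sum) (c.blocks.getD i 0)
            * (p (c.blocks.getD i 0)).eval (z (n - (c.blocks.take (i + 1)).sum)) := by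
  -- the summand on the right is `goncarovWeight q z p n c.blocks`, unfolded
  suffices h : ∀ n, (t n).eval 0 = goncarovConstTerm q z p n from fun n _ => h n
  intro n
  induction n using Nat.strong_induction_on with
  | _ n ih =>
    cases n with
    | zero => rw [ht0, eval_one, goncarovConstTerm_zero]
    | succ n =>
      rw [hrec _ n.succ_pos, eval_sub, eval_finsetSum, hpeval _ n.succ_pos, zero_sub,
        goncarovConstTerm_succ]
      congr 1
      refine sum_congr rfl fun i hi => ?_
      rw [eval_mul, eval_C, ih i (mem_range.1 hi)]

/-- the constant term of the n-th generalized q-Gončarov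
polynomial as a signed sum over compositions of `n`: for each composition
with blocks `b₁,…,b_k` and partial sums `sᵢ`, the product
`∏ᵢ binom(sᵢ,bᵢ)_q p_{bᵢ}(z_{n-sᵢ})` weighted by `(-1)^k`. -/
theorem goncarov_const_term_formula {R : Type*} [CommRing R] (q : R) (z : ℕ → R)
    (p t : ℕ → Polynomial R) (hp0 : p 0 = 1)
    (hpeval : ∀ m : ℕ, 1 ≤ m → (p m).eval 0 = 0)
    (ht0 : t 0 = 1)
    (hrec : ∀ n : ℕ, 1 ≤ n → t n = p n - ∑ i ∈ Finset.range n,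
      Polynomial.C (qBinAt q n i * (p (n - i)).eval (z i)) * t i) :
    ∀ n : ℕ, 1 ≤ n →
      (t n).eval 0 = ∑ c : Composition n, (-1 : R) ^ c.length *
        ∏ i ∈ Finset.range c.length,
          qBinAt q ((c.blocks.take (i + 1)).sum) (c.blocks.getD i 0)
            * (p (c.blocks.getD i 0)).eval (z (n - (c.blocks.take (i + 1)).sum)) :=
  goncarov_const_term_formula_general q z p t hpeval ht0 hrec
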